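/- arXiv:cs/9910019 — 4 statements merged into one kernel-verified Lean document; each statement's English description precedes it below -/
import Mathlib

section
/- If a set S of data checkpoints {C^{i_x}_x : x ∈ I} (at most one per data object) satisfies property P: for all x,y ∈ I, there is no dependence path from C^{i_x}_x to C^{i_y}_y, then S can be extended to a consistent global checkpoint, i.e., a set containing exactly one checkpoint per data object, no two of which are related by a dependence path. -/
/-- A dependence edge between checkpoint intervals of data objects:
it starts in interval `I^{srcIdx}_{src}` and arrives in interval `I^{dstIdx}_{dst}`. -/
structure DepEdge (Obj : Type) where
  src : Obj
  srcIdx : ℕ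
  dst : Obj
  dstIdx : ℕ

/-- Dependence path (Z-path) from checkpoint `C^i_x` to checkpoint `C^j_y`:
either same object with smaller index, or a sequence of dependence edges where
the first starts after `C^i_x`, each next edge starts in the same or a later
interval of the object where the previous arrives, and the last arrives before `C^j_y`. -/
def DP {Obj : Type} (E : Set (DepEdge Obj)) (x : Obj) (i : ℕ) (y : Obj) (j : ℕ) : Prop :=
  (x = y ∧ i < j) ∨
  ∃ r : ℕ, ∃ d : Fin (r + 1) → DepEdge Obj,
    (∀ q, d q ∈ E) ∧
    (d 0).src = x ∧ i ≤ (d 0).srcIdx ∧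
    (∀ q : Fin r, (d q.succ).src = (d q.castSucc).dst ∧
      (d q.castSucc).dstIdx ≤ (d q.succ).srcIdx) ∧
    (d (Fin.last r)).dst = y ∧ (d (Fin.last r)).dstIdx < j

/-- A global checkpoint `G` (one checkpoint index per object) is consistent iff
no dependence edge starts after a member checkpoint and arrives before a member
checkpoint. -/
def ConsistentGC {Obj : Type} (E : Set (DepEdge Obj)) (G : Obj → ℕ) : Prop :=
  ∀ e ∈ E, ¬ (G e.src ≤ e.srcIdx ∧ e.dstIdx < G e.dst)

lemma DP.mono {Obj : Type} {E : Set (DepEdge Obj)} {x : Obj} {i : ℕ} {y : Obj} {j j' : ℕ}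
    (h : DP E x i y j) (hj : j ≤ j') : DP E x i y j' := by
  rcases h with ⟨h1, h2⟩ | ⟨r, d, hd⟩
  · exact Or.inl ⟨h1, by omega⟩
  · exact Or.inr ⟨r, d, hd.1, hd.2.1, hd.2.2.1, hd.2.2.2.1, hd.2.2.2.2.1, by omega⟩

lemma DP.append {Obj : Type} {E : Set (DepEdge Obj)} {x : Obj} {i : ℕ} {y : Obj} {j : ℕ}
    (h : DP E x i y j) (e : DepEdge Obj) (he : e ∈ E) (hsrc : e.src = y)
    (hidx : j ≤ e.srcIdx + 1) : DP E x i e.dst (e.dstIdx + 1) := by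
  rcases h with ⟨h1, h2⟩ | ⟨r, d, hmem, h0src, h0idx, hlink, hlast, hlastidx⟩
  · subst h1
    refine Or.inr ⟨0, fun _ => e, fun _ => he, hsrc, show i ≤ e.srcIdx by omega, ?_, rfl, show e.dstIdx < e.dstIdx + 1 by omega⟩
    intro q; exact q.elim0
  · refine Or.inr ⟨r + 1, Fin.snoc d e, ?_, ?_, ?_, ?_, ?_, ?_⟩
    · intro q
      induction q using Fin.lastCases with
      | last => simpa [Fin.snoc_last] using he
      | cast k => rw [Fin.snoc_castSucc]; exact hmem k
    · have h0 : (0 : Fin (r + 2)) = Fin.castSucc 0 := rfl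
      rw [h0, Fin.snoc_castSucc]; exact h0src
    · have h0 : (0 : Fin (r + 2)) = Fin.castSucc 0 := rfl
      rw [h0, Fin.snoc_castSucc]; exact h0idx
    · intro q
      induction q using Fin.lastCases with
      | last =>
        rw [Fin.succ_last, Fin.snoc_last, Fin.snoc_castSucc]
        exact ⟨hsrc.trans hlast.symm, by omega⟩
      | cast k =>
        have h1 : (Fin.castSucc k).succ = Fin.castSucc k.succ := by
          simp [Fin.ext_iff]
        have h2 : Fin.castSucc (Fin.castSucc k) = Fin.castSucc k.castSucc := rfl
        rw [h1, h2, Fin.snoc_castSucc, Fin.snoc_castSucc]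
        exact hlink k
    · rw [Fin.snoc_last]
    · rw [Fin.snoc_last]; omega

/-- sufficiency: if a set of checkpoints, at most one per object,
is pairwise unrelated by dependence paths, it extends to a consistent global
checkpoint. -/
theorem stmt3 {Obj : Type} [Fintype Obj] (E : Set (DepEdge Obj)) (hE : E.Finite)
    (I : Set Obj) (f : Obj → ℕ)
    (hP : ∀ x ∈ I, ∀ y ∈ I, ¬ DP E x (f x) y (f y)) :
    ∃ G : Obj → ℕ, (∀ x ∈ I, G x = f x) ∧ ConsistentGC E G := by
  classical
  set B : Obj → Set ℕ := fun x => {j | ∃ y ∈ I, DP E y (f y) x j} with hB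
  set M : ℕ := hE.toFinset.sup (fun e => e.srcIdx) + 1 with hM
  refine ⟨fun x => if x ∈ I then f x else if (B x).Nonempty then sInf (B x) - 1 else M,
    fun x hx => by simp [hx], ?_⟩
  rintro e he ⟨h1, h2⟩
  -- Step A: produce a DP from some member to C^{srcIdx+1}_{e.src}
  have hA : ∃ y ∈ I, DP E y (f y) e.src (e.srcIdx + 1) := by
    by_cases hs : e.src ∈ I
    · simp only [hs, if_pos] at h1
      exact ⟨e.src, hs, Or.inl ⟨rfl, by omega⟩⟩
    · simp only [hs, if_neg, if_false] at h1
      by_cases hne : (B e.src).Nonempty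
      · rw [if_pos hne] at h1
        obtain ⟨y, hy, hdp⟩ := Nat.sInf_mem hne
        have h0 : (0 : ℕ) ∉ B e.src := by
          rintro ⟨y, hy, (⟨h, h'⟩ | ⟨r, d, _, _, _, _, _, h'⟩)⟩ <;> omega
        have hpos : 1 ≤ sInf (B e.src) := by
          rcases Nat.eq_zero_or_pos (sInf (B e.src)) with h | h
          · exact absurd (h ▸ Nat.sInf_mem hne) h0
          · exact h
        exact ⟨y, hy, hdp.mono (by omega)⟩
      · rw [if_neg hne] at h1
        have : e.srcIdx ≤ hE.toFinset.sup (fun e => e.srcIdx) :=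
          Finset.le_sup (hE.mem_toFinset.mpr he)
        omega
  obtain ⟨y, hy, hdp⟩ := hA
  -- Step B: append the edge e
  have hdp' : DP E y (f y) e.dst (e.dstIdx + 1) := hdp.append e he rfl (le_refl _)
  -- Step C: contradiction with h2
  by_cases hd : e.dst ∈ I
  · simp only [hd, if_pos] at h2
    exact hP y hy e.dst hd (hdp'.mono (by omega))
  · have hne : (B e.dst).Nonempty := ⟨e.dstIdx + 1, y, hy, hdp'⟩
    simp only [hd, if_neg, if_false, hne, if_pos] at h2
    have : sInf (B e.dst) ≤ e.dstIdx + 1 := Nat.sInf_le ⟨y, hy, hdp'⟩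
    omega
end

section
/- If a set S of data checkpoints {C^{i_x}_x : x ∈ I} is contained in some consistent global checkpoint, then for all x, y ∈ I there is no dependence path from C^{i_x}_x to C^{i_y}_y. (Necessity direction of the Netzer–Xu-style theorem for database checkpoints.) -/
/-- necessity: checkpoints contained in a consistent global
checkpoint are pairwise unrelated by dependence paths. -/
theorem stmt4 {Obj : Type} (E : Set (DepEdge Obj))
    (I : Set Obj) (f : Obj → ℕ) (G : Obj → ℕ)
    (hG : ConsistentGC E G) (hS : ∀ x ∈ I, G x = f x) :
    ∀ x ∈ I, ∀ y ∈ I, ¬ DP E x (f x) y (f y) := by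
  intro x hx y hy hdp
  rcases hdp with ⟨hxy, hlt⟩ | ⟨r, d, hE, h0src, h0idx, hstep, hlast, hlastidx⟩
  · subst hxy; exact lt_irrefl _ hlt
  · have key : ∀ q : Fin (r + 1), G (d q).src ≤ (d q).srcIdx := by
      intro q
      induction q using Fin.induction with
      | zero => rw [h0src, hS x hx]; exact h0idx
      | succ q ih =>
        have h1 := (hstep q).1
        have h2 := (hstep q).2
        have := hG (d q.castSucc) (hE _)
        push_neg at this
        have := this ih
        rw [h1]
        exact le_trans this h2
    have := hG (d (Fin.last r)) (hE _)
    push_neg at this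
    have := this (key _)
    rw [hlast, hS y hy] at this
    exact absurd hlastidx (not_lt.mpr this)
end

section
/- A set S of data checkpoints, one from each object of a subset I of the data objects, is part of a consistent global checkpoint if and only if no two checkpoints of S (including a checkpoint with itself) are related by a dependence path. -/
lemma DP_mono {Obj : Type} {E : Set (DepEdge Obj)} {x y : Obj} {i j j' : ℕ}
    (h : DP E x i y j) (hj : j ≤ j') : DP E x i y j' := by
  rcases h with ⟨hxy, hij⟩ | ⟨r, d, h1, h2, h3, h4, h5, h6⟩
  · exact Or.inl ⟨hxy, lt_of_lt_of_le hij hj⟩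
  · exact Or.inr ⟨r, d, h1, h2, h3, h4, h5, lt_of_lt_of_le h6 hj⟩

lemma DP_snoc {Obj : Type} {E : Set (DepEdge Obj)} {x y : Obj} {i : ℕ} {e : DepEdge Obj}
    (h : DP E x i y (e.srcIdx + 1)) (he : e ∈ E) (hsrc : e.src = y) :
    DP E x i e.dst (e.dstIdx + 1) := by
  rcases h with ⟨rfl, hij⟩ | ⟨r, d, h1, h2, h3, h4, h5, h6⟩
  · exact Or.inr ⟨0, fun _ => e, fun _ => he, hsrc, Nat.lt_succ_iff.mp hij,
      fun q => q.elim0, rfl, Nat.lt_succ_self _⟩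
  · refine Or.inr ⟨r + 1, Fin.snoc d e, ?_, ?_, ?_, ?_, ?_, ?_⟩
    · intro q
      refine Fin.lastCases ?_ ?_ q
      · rw [Fin.snoc_last]; exact he
      · intro j; rw [Fin.snoc_castSucc]; exact h1 j
    · have h0 : (0 : Fin (r + 1 + 1)) = Fin.castSucc 0 := rfl
      rw [h0, Fin.snoc_castSucc]; exact h2
    · have h0 : (0 : Fin (r + 1 + 1)) = Fin.castSucc 0 := rfl
      rw [h0, Fin.snoc_castSucc]; exact h3
    · intro q
      refine Fin.lastCases ?_ ?_ q
      · rw [Fin.succ_last, Fin.snoc_last, Fin.snoc_castSucc]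
        exact ⟨hsrc.trans h5.symm, Nat.lt_succ_iff.mp h6⟩
      · intro j
        rw [Fin.succ_castSucc, Fin.snoc_castSucc, Fin.snoc_castSucc]
        exact h4 j
    · rw [Fin.snoc_last]
    · rw [Fin.snoc_last]; exact Nat.lt_succ_self _

/-- main theorem: a set of checkpoints, one per object of a
subset I of the objects, is part of a consistent global checkpoint iff no two
of them (including a checkpoint with itself) are related by a dependence path. -/
theorem stmt5 {Obj : Type} [Fintype Obj] (E : Set (DepEdge Obj)) (hE : E.Finite)
    (I : Set Obj) (f : Obj → ℕ) :
    (∃ G : Obj → ℕ, ConsistentGC E G ∧ ∀ x ∈ I, G x = f x) ↔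
      (∀ x ∈ I, ∀ y ∈ I, ¬ DP E x (f x) y (f y)) := by
  classical
  constructor
  · rintro ⟨G, hG, hGf⟩ x hx y hy hdp
    rcases hdp with ⟨rfl, hlt⟩ | ⟨r, d, h1, h2, h3, h4, h5, h6⟩
    · exact lt_irrefl _ hlt
    · -- every edge of the path starts at or after the checkpoint of G
      have key : ∀ n : ℕ, ∀ hn : n < r + 1, G (d ⟨n, hn⟩).src ≤ (d ⟨n, hn⟩).srcIdx := by
        intro n
        induction n with
        | zero =>
          intro hn
          have h0 : (⟨0, hn⟩ : Fin (r + 1)) = 0 := rfl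
          rw [h0, h2, hGf x hx]
          exact h3
        | succ n ih =>
          intro hn
          have hnr : n < r := Nat.lt_of_succ_lt_succ hn
          set j : Fin r := ⟨n, hnr⟩ with hj
          have hcs : (⟨n, (by omega : n < r + 1)⟩ : Fin (r + 1)) = j.castSucc :=
            Fin.ext rfl
          have hsc : (⟨n + 1, hn⟩ : Fin (r + 1)) = j.succ := Fin.ext rfl
          have ihc : G (d j.castSucc).src ≤ (d j.castSucc).srcIdx := by
            have := ih ((by omega : n < r + 1))
            rwa [hcs] at this
          have hcons := hG (d j.castSucc) (h1 j.castSucc)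
          have hdst : G (d j.castSucc).dst ≤ (d j.castSucc).dstIdx := by
            by_contra hlt
            exact hcons ⟨ihc, Nat.lt_of_not_le hlt⟩
          rw [hsc, (h4 j).1]
          exact le_trans hdst (h4 j).2
      have hlastkey : G (d (Fin.last r)).src ≤ (d (Fin.last r)).srcIdx :=
        key r (Nat.lt_succ_self r)
      have hcons := hG (d (Fin.last r)) (h1 (Fin.last r))
      have hdst : G (d (Fin.last r)).dst ≤ (d (Fin.last r)).dstIdx := by
        by_contra hlt
        exact hcons ⟨hlastkey, Nat.lt_of_not_le hlt⟩
      rw [h5, hGf y hy] at hdst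
      omega
  · intro hI
    set P : Obj → ℕ → Prop := fun y j => ∃ x ∈ I, DP E x (f x) y j with hP
    set M : ℕ := hE.toFinset.sup (fun e => e.srcIdx) + 1 with hM
    have notP0 : ∀ y, ¬ P y 0 := by
      rintro y ⟨x, hx, (⟨_, hlt⟩ | ⟨r, d, _, _, _, _, _, hlt⟩)⟩ <;> omega
    have monoP : ∀ y j j', P y j → j ≤ j' → P y j' := by
      rintro y j j' ⟨x, hx, h⟩ hj
      exact ⟨x, hx, DP_mono h hj⟩
    refine ⟨fun y => if h : ∃ j, P y (j + 1) then Nat.find h else M, ?_, ?_⟩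
    · -- consistency
      rintro e he ⟨hsle, hdlt⟩
      simp only [] at hsle hdlt
      by_cases hex : ∃ j, P e.src (j + 1)
      · rw [dif_pos hex] at hsle
        obtain ⟨x, hx, hdp⟩ := Nat.find_spec hex
        have hdp' : DP E x (f x) e.src (e.srcIdx + 1) := DP_mono hdp (by omega)
        have hdp'' : DP E x (f x) e.dst (e.dstIdx + 1) := DP_snoc hdp' he rfl
        by_cases hex' : ∃ j, P e.dst (j + 1)
        · rw [dif_pos hex'] at hdlt
          -- Nat.find hex' > e.dstIdx, but e.dstIdx is a witness
          have : Nat.find hex' ≤ e.dstIdx := Nat.find_le ⟨x, hx, hdp''⟩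
          omega
        · exact hex' ⟨e.dstIdx, x, hx, hdp''⟩
      · rw [dif_neg hex] at hsle
        have : e.srcIdx ≤ hE.toFinset.sup (fun e => e.srcIdx) :=
          Finset.le_sup (f := fun e => e.srcIdx) (hE.mem_toFinset.mpr he)
        omega
    · -- agrees with f on I
      intro y hy
      simp only []
      have hself : P y (f y + 1) := ⟨y, hy, Or.inl ⟨rfl, Nat.lt_succ_self _⟩⟩
      have hex : ∃ j, P y (j + 1) := ⟨f y, hself⟩
      rw [dif_pos hex]
      refine le_antisymm (Nat.find_le hself) ?_
      by_contra hlt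
      push_neg at hlt
      have hspec := Nat.find_spec hex
      have : P y (f y) := monoP _ _ _ hspec (by omega)
      obtain ⟨x, hx, hdp⟩ := this
      exact hI x hx y hy hdp
end

section
/- A recovery line L (a global checkpoint) is consistent if and only if (1) no transaction-write edge ('black arrow') crosses L, and (2) no serialization-order edge ('dashed arrow') crosses L from right to left, where an edge crosses from right to left if it starts at a local state at or after L on its object and arrives at a local state before L on another object. -/
/-- characterization of consistent recovery lines. Local states
of object x are pairs (x, k); `Eb` is the set of transaction-write edges
(black arrows) and `Ed` the set of serialization-order edges (dashed arrows);
<_LS is generated by both kinds of arrows. Structural assumptions: every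
version change is the write of some transaction on that object (so successive
states are linked by a black arrow), and black arrows come from atomic
commits: if a transaction writing x and y induces the black arrow
pre(x) → post(y), it also induces the black arrow pre(y) → post(x).
A recovery line L (one checkpoint state (z, L z) per object z) is consistent
(no two of its checkpoints are <_LS-related) iff (1) no black arrow crosses L
in either direction and (2) no dashed arrow crosses L from right to left,
i.e. starts at or after L on its object and arrives at or before L on the
target object. -/
theorem stmt15 {Obj : Type}
    (Eb Ed : Set ((Obj × ℕ) × (Obj × ℕ)))
    (hsucc : ∀ (x : Obj) (n : ℕ), ((x, n), (x, n + 1)) ∈ Eb)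
    (hpair : ∀ e ∈ Eb, 0 < e.2.2 ∧ ((e.2.1, e.2.2 - 1), (e.1.1, e.1.2 + 1)) ∈ Eb)
    (L : Obj → ℕ) :
    (∀ x y : Obj,
        ¬ Relation.TransGen (fun a b : Obj × ℕ => (a, b) ∈ Eb ∪ Ed)
            (x, L x) (y, L y)) ↔
      ((∀ e ∈ Eb, ¬ ((L e.1.1 ≤ e.1.2 ∧ e.2.2 ≤ L e.2.1) ∨
                     (e.1.2 < L e.1.1 ∧ L e.2.1 < e.2.2))) ∧
       (∀ e ∈ Ed, ¬ (L e.1.1 ≤ e.1.2 ∧ e.2.2 ≤ L e.2.1))) := by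
  set R : Obj × ℕ → Obj × ℕ → Prop := fun a b => (a, b) ∈ Eb ∪ Ed with hR
  have hchain : ∀ (z : Obj) (k m : ℕ), k ≤ m →
      Relation.ReflTransGen R (z, k) (z, m) := by
    intro z k m hkm
    induction m, hkm using Nat.le_induction with
    | base => exact .refl
    | succ n hn ih => exact ih.tail (Or.inl (hsucc z n))
  constructor
  · intro hcons
    constructor
    · rintro ⟨⟨a, i⟩, ⟨b, j⟩⟩ he h
      rcases h with ⟨h1, h2⟩ | ⟨h1, h2⟩
      · exact hcons a b
          ((Relation.TransGen.tail' (hchain a (L a) i h1) (Or.inl he)).trans_left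
            (hchain b j (L b) h2))
      · obtain ⟨hj0, he'⟩ := hpair _ he
        have hj0' : 0 < j := hj0
        have h1' : i < L a := h1
        have h2' : L b < j := h2
        exact hcons b a
          ((Relation.TransGen.tail' (hchain b (L b) (j - 1) (by omega)) (Or.inl he')).trans_left
            (hchain a (i + 1) (L a) (by omega)))
    · rintro ⟨⟨a, i⟩, ⟨b, j⟩⟩ he ⟨h1, h2⟩
      exact hcons a b
        ((Relation.TransGen.tail' (hchain a (L a) i h1) (Or.inr he)).trans_left
          (hchain b j (L b) h2))
  · rintro ⟨hb, hd⟩ x y hpath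
    have step : ∀ c p : Obj × ℕ, L c.1 ≤ c.2 → R c p → L p.1 < p.2 := by
      intro c p hc h
      by_contra hle
      push_neg at hle
      rcases h with hEb | hEd
      · exact hb (c, p) hEb (Or.inl ⟨hc, hle⟩)
      · exact hd (c, p) hEd ⟨hc, hle⟩
    have key : ∀ p : Obj × ℕ, Relation.TransGen R (x, L x) p → L p.1 < p.2 := by
      intro p hp
      induction hp with
      | single h => exact step _ _ le_rfl h
      | tail _ h ih => exact step _ _ ih.le h
    exact lt_irrefl _ (key (y, L y) hpath)
end
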